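/- Let (Ω, F, P) be a probability space with P a probability measure on a finite (or countable) sample space, and let X : Ω → 𝒳, Z : Ω → 𝒵, and Y, Ŷ : Ω → {0,1} be random variables with 𝒳, 𝒵 finite. Fix j, k ∈ 𝒵 and a nonempty set S ⊆ 𝒳 such that for all x ∈ S and z ∈ {j, k}, P(X = x, Y = 1, Ŷ = 1, Z = z) > 0 and P(X = x, Y = 1, Ŷ = 1, Z = z) / P(Ŷ = 1, Z = z) > 0 (i.e., the relevant joint events have positive probability). For z ∈ {j, k} and x ∈ S define c_z(x) = [ P(X = x | Z = z) · P(Y = 1 | Ŷ = 1, Z = z) ] / [ P(X = x | Ŷ = 1, Z = z) · P(Y = 1 | Z = z) ]. Suppose that for every x ∈ S, P(Ŷ = 1 | X = x, Z = j) ≤ P(Ŷ = 1 | X = x, Z = k). Then for every x ∈ S, P(Ŷ = 1 | Y = 1, Z = j) ≤ ( c_j(x) / c_k(x) ) · P(Ŷ = 1 | Y = 1, Z = k); equivalently, P(Ŷ = 1 | Y = 1, Z = j) / P(Ŷ = 1 | Y = 1, Z = k) ≤ inf over x ∈ S of c_j(x) / c_k(x). -/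

import Mathlib

/-!
Bayes' rule rewrites the true-positive rate of each group as
`P(Ŷ=1 | Y=1, Z=z) = c_z(x) · P(Ŷ=1 | X=x, Z=z)` for every feature value `x` whose joint event
`{X=x, Y=1, Ŷ=1, Z=z}` has positive probability. Dividing the identity for `j` by the one for `k`
and using monotonicity `P(Ŷ=1 | X=x, Z=j) ≤ P(Ŷ=1 | X=x, Z=k)` gives the bound.
-/

/- Probability of the event `A` under the probability mass function `P` on a finite
sample space `Ω`. -/
open Classical in
noncomputable def pr {Ω : Type*} [Fintype Ω] (P : Ω → ℝ) (A : Ω → Prop) : ℝ :=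
  ∑ ω : Ω, if A ω then P ω else 0

/-- Conditional probability `P(B | A)` under the probability mass function `P`. -/
noncomputable def condPr {Ω : Type*} [Fintype Ω] (P : Ω → ℝ) (A B : Ω → Prop) : ℝ :=
  pr P (fun ω => A ω ∧ B ω) / pr P A

/-- The coefficient
`c_z(x) = (P(X=x|Z=z) · P(Y=1|Ŷ=1,Z=z)) / (P(X=x|Ŷ=1,Z=z) · P(Y=1|Z=z))`
from Lemma 4. -/
noncomputable def ccoef {Ω 𝒳 𝒵 : Type*} [Fintype Ω]
    (P : Ω → ℝ) (X : Ω → 𝒳) (Z : Ω → 𝒵) (Y Yhat : Ω → Fin 2) (z : 𝒵) (x : 𝒳) : ℝ :=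
  (condPr P (fun ω => Z ω = z) (fun ω => X ω = x)
      * condPr P (fun ω => Yhat ω = 1 ∧ Z ω = z) (fun ω => Y ω = 1))
    / (condPr P (fun ω => Yhat ω = 1 ∧ Z ω = z) (fun ω => X ω = x)
      * condPr P (fun ω => Z ω = z) (fun ω => Y ω = 1))

section Events

variable {Ω : Type*} [Fintype Ω] {P : Ω → ℝ}

open Classical in
lemma pr_mono (hP0 : ∀ ω, 0 ≤ P ω) {A B : Ω → Prop} (h : ∀ ω, A ω → B ω) :
    pr P A ≤ pr P B :=
  Finset.sum_le_sum fun ω _ => by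
    split_ifs with hA hB hB
    · exact le_rfl
    · exact absurd (h ω hA) hB
    · exact hP0 ω
    · exact le_rfl

lemma pr_pos_of_imp (hP0 : ∀ ω, 0 ≤ P ω) {A B : Ω → Prop} (hA : 0 < pr P A)
    (h : ∀ ω, A ω → B ω) : 0 < pr P B :=
  hA.trans_le (pr_mono hP0 h)

lemma condPr_pos (hP0 : ∀ ω, 0 ≤ P ω) {A B : Ω → Prop}
    (h : 0 < pr P (fun ω => A ω ∧ B ω)) : 0 < condPr P A B :=
  div_pos h (pr_pos_of_imp hP0 h fun _ hAB => hAB.1)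

/-- Both sides reduce to `P(A ∧ B ∧ D) / P(A ∧ D)`; positivity of the finer event
`C ∧ A ∧ B ∧ D` makes every probability cancelled on the way nonzero. -/
theorem condPr_eq_mul_condPr (hP0 : ∀ ω, 0 ≤ P ω) {A B C D : Ω → Prop}
    (h : 0 < pr P (fun ω => C ω ∧ A ω ∧ B ω ∧ D ω)) :
    condPr P (fun ω => A ω ∧ D ω) B =
      condPr P D C * condPr P (fun ω => B ω ∧ D ω) A
          / (condPr P (fun ω => B ω ∧ D ω) C * condPr P D A)
        * condPr P (fun ω => C ω ∧ D ω) B := by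
  have hAD := pr_pos_of_imp hP0 h (B := fun ω => A ω ∧ D ω) (by tauto)
  have hCD := pr_pos_of_imp hP0 h (B := fun ω => C ω ∧ D ω) (by tauto)
  have hCBD := pr_pos_of_imp hP0 h (B := fun ω => C ω ∧ B ω ∧ D ω) (by tauto)
  have hBD := pr_pos_of_imp hP0 h (B := fun ω => B ω ∧ D ω) (by tauto)
  have hD := pr_pos_of_imp hP0 h (B := D) (by tauto)
  unfold condPr
  simp only [and_comm, and_left_comm] at hAD hCD hCBD hBD ⊢
  field_simp

lemma bayes_coef_pos (hP0 : ∀ ω, 0 ≤ P ω) {A B C D : Ω → Prop}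
    (h : 0 < pr P (fun ω => C ω ∧ A ω ∧ B ω ∧ D ω)) :
    0 < condPr P D C * condPr P (fun ω => B ω ∧ D ω) A
      / (condPr P (fun ω => B ω ∧ D ω) C * condPr P D A) := by
  have hDC := condPr_pos (A := D) (B := C) hP0 (pr_pos_of_imp hP0 h (by tauto))
  have hBDA := condPr_pos (A := fun ω => B ω ∧ D ω) (B := A) hP0
    (pr_pos_of_imp hP0 h (by tauto))
  have hBDC := condPr_pos (A := fun ω => B ω ∧ D ω) (B := C) hP0
    (pr_pos_of_imp hP0 h (by tauto))
  have hDA := condPr_pos (A := D) (B := A) hP0 (pr_pos_of_imp hP0 h (by tauto))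
  positivity

end Events

section Classifier

variable {Ω 𝒳 𝒵 : Type*} [Fintype Ω] {P : Ω → ℝ}
  (X : Ω → 𝒳) (Z : Ω → 𝒵) (Y Yhat : Ω → Fin 2) (z : 𝒵) (x : 𝒳)

lemma ccoef_pos (hP0 : ∀ ω, 0 ≤ P ω)
    (h : 0 < pr P (fun ω => X ω = x ∧ Y ω = 1 ∧ Yhat ω = 1 ∧ Z ω = z)) :
    0 < ccoef P X Z Y Yhat z x :=
  bayes_coef_pos hP0 h

theorem condPr_eq_ccoef_mul_condPr (hP0 : ∀ ω, 0 ≤ P ω)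
    (h : 0 < pr P (fun ω => X ω = x ∧ Y ω = 1 ∧ Yhat ω = 1 ∧ Z ω = z)) :
    condPr P (fun ω => Y ω = 1 ∧ Z ω = z) (fun ω => Yhat ω = 1) =
      ccoef P X Z Y Yhat z x * condPr P (fun ω => X ω = x ∧ Z ω = z) (fun ω => Yhat ω = 1) :=
  condPr_eq_mul_condPr hP0 h

end Classifier

theorem binary_classifier_one_sided_equal_opportunity_bound_general
    {Ω 𝒳 𝒵 : Type*} [Fintype Ω]
    (P : Ω → ℝ) (hP0 : ∀ ω, 0 ≤ P ω)
    (X : Ω → 𝒳) (Z : Ω → 𝒵) (Y Yhat : Ω → Fin 2)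
    (j k : 𝒵) (S : Finset 𝒳)
    (hposj : ∀ x ∈ S,
      0 < pr P (fun ω => X ω = x ∧ Y ω = 1 ∧ Yhat ω = 1 ∧ Z ω = j)
      ∧ 0 < pr P (fun ω => X ω = x ∧ Y ω = 1 ∧ Yhat ω = 1 ∧ Z ω = j)
            / pr P (fun ω => Yhat ω = 1 ∧ Z ω = j))
    (hposk : ∀ x ∈ S,
      0 < pr P (fun ω => X ω = x ∧ Y ω = 1 ∧ Yhat ω = 1 ∧ Z ω = k)
      ∧ 0 < pr P (fun ω => X ω = x ∧ Y ω = 1 ∧ Yhat ω = 1 ∧ Z ω = k)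
            / pr P (fun ω => Yhat ω = 1 ∧ Z ω = k))
    (hmono : ∀ x ∈ S,
      condPr P (fun ω => X ω = x ∧ Z ω = j) (fun ω => Yhat ω = 1)
        ≤ condPr P (fun ω => X ω = x ∧ Z ω = k) (fun ω => Yhat ω = 1)) :
    ∀ x ∈ S,
      condPr P (fun ω => Y ω = 1 ∧ Z ω = j) (fun ω => Yhat ω = 1)
        ≤ (ccoef P X Z Y Yhat j x / ccoef P X Z Y Yhat k x)
          * condPr P (fun ω => Y ω = 1 ∧ Z ω = k) (fun ω => Yhat ω = 1) := by
  intro x hx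
  have hj := (hposj x hx).1
  have hk := (hposk x hx).1
  rw [condPr_eq_ccoef_mul_condPr X Z Y Yhat j x hP0 hj,
    condPr_eq_ccoef_mul_condPr X Z Y Yhat k x hP0 hk]
  have hcj := ccoef_pos X Z Y Yhat j x hP0 hj
  have hck := ccoef_pos X Z Y Yhat k x hP0 hk
  rw [← mul_assoc, div_mul_cancel₀ _ hck.ne']
  exact mul_le_mul_of_nonneg_left (hmono x hx) hcj.le

/-- Lemma 4: for a binary classifier `Ŷ` with true label `Y` that is monotonic between
the groups `Z = j` and `Z = k` on a set `S` of feature values whose relevant joint events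
have positive probability, for every `x ∈ S` we have
`P(Ŷ=1|Y=1,Z=j) ≤ (c_j(x)/c_k(x)) · P(Ŷ=1|Y=1,Z=k)`, i.e. the one-sided equal
opportunity ratio `P(Ŷ=1|Y=1,Z=j)/P(Ŷ=1|Y=1,Z=k)` is bounded by the infimum over
`x ∈ S` of `c_j(x)/c_k(x)`. -/
theorem binary_classifier_one_sided_equal_opportunity_bound
    {Ω 𝒳 𝒵 : Type*} [Fintype Ω] [Fintype 𝒳] [Fintype 𝒵]
    (P : Ω → ℝ) (hP0 : ∀ ω, 0 ≤ P ω) (hP1 : ∑ ω : Ω, P ω = 1)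
    (X : Ω → 𝒳) (Z : Ω → 𝒵) (Y Yhat : Ω → Fin 2)
    (j k : 𝒵) (S : Finset 𝒳) (hS : S.Nonempty)
    (hposj : ∀ x ∈ S,
      0 < pr P (fun ω => X ω = x ∧ Y ω = 1 ∧ Yhat ω = 1 ∧ Z ω = j)
      ∧ 0 < pr P (fun ω => X ω = x ∧ Y ω = 1 ∧ Yhat ω = 1 ∧ Z ω = j)
            / pr P (fun ω => Yhat ω = 1 ∧ Z ω = j))
    (hposk : ∀ x ∈ S,
      0 < pr P (fun ω => X ω = x ∧ Y ω = 1 ∧ Yhat ω = 1 ∧ Z ω = k)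
      ∧ 0 < pr P (fun ω => X ω = x ∧ Y ω = 1 ∧ Yhat ω = 1 ∧ Z ω = k)
            / pr P (fun ω => Yhat ω = 1 ∧ Z ω = k))
    (hmono : ∀ x ∈ S,
      condPr P (fun ω => X ω = x ∧ Z ω = j) (fun ω => Yhat ω = 1)
        ≤ condPr P (fun ω => X ω = x ∧ Z ω = k) (fun ω => Yhat ω = 1)) :
    ∀ x ∈ S,
      condPr P (fun ω => Y ω = 1 ∧ Z ω = j) (fun ω => Yhat ω = 1)
        ≤ (ccoef P X Z Y Yhat j x / ccoef P X Z Y Yhat k x)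
          * condPr P (fun ω => Y ω = 1 ∧ Z ω = k) (fun ω => Yhat ω = 1) :=
  binary_classifier_one_sided_equal_opportunity_bound_general P hP0 X Z Y Yhat j k S hposj hposk
    hmono
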